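/- arXiv:1505.05642 — 2 statements merged into one kernel-verified Lean document; each statement's English description precedes it below -/
import Mathlib

section
/- For every integer q ≥ 2, the minimum Hamming distance of the Z_q-MacDonald code M_{3,2}(q) equals 2 + (q − q/d − 1)(q + 1), where d > 1 is the smallest divisor of q; in particular M_{3,2}(q) is a [q^2, 3, 2 + (q − q/d − 1)(q + 1)] Z_q-linear code. -/
/-- Hamming weight of a word over `ZMod q`: the number of nonzero coordinates. -/
def wt {q : ℕ} (l : List (ZMod q)) : ℕ := l.countP (fun x => decide (x ≠ 0))

/-- The word `(c, α, c + α·𝟏, c + 2α·𝟏, …, c + (q−1)α·𝟏)`, where `𝟏` is the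
all-ones vector of the same length as `c`. -/
def simplexWord (q : ℕ) (α : ZMod q) (c : List (ZMod q)) : List (ZMod q) :=
  c ++ α :: (List.range (q - 1)).flatMap (fun i => c.map (fun x => x + ((i + 1 : ℕ) : ZMod q) * α))

/-- The `ZMod q`-Simplex code `S_k(q)` of dimension `k`, as a set of words (lists):
`S_1(q) = ZMod q` (as length-1 words) and
`S_k(q) = {(c, α, c + α·𝟏, …, c + (q−1)α·𝟏) : c ∈ S_{k-1}(q), α ∈ ZMod q}`. -/
def simplex (q : ℕ) : ℕ → Set (List (ZMod q))
  | 0 => {[]}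
  | k + 1 => {w | ∃ c ∈ simplex q k, ∃ α : ZMod q, w = simplexWord q α c}

/-- The word `(α, c + α·𝟏, c + 2α·𝟏, …, c + (q−1)α·𝟏)`. -/
def macWord (q : ℕ) (α : ZMod q) (c : List (ZMod q)) : List (ZMod q) :=
  α :: (List.range (q - 1)).flatMap (fun i => c.map (fun x => x + ((i + 1 : ℕ) : ZMod q) * α))

/-- The `ZMod q`-MacDonald code `M_{k,k-1}(q)`, as a set of words:
`M_{k,k-1}(q) = {(α, c + α·𝟏, …, c + (q−1)α·𝟏) : α ∈ ZMod q, c ∈ S_{k-1}(q)}`. -/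
def macdonald (q k : ℕ) : Set (List (ZMod q)) :=
  {w | ∃ α : ZMod q, ∃ c ∈ simplex q (k - 1), w = macWord q α c}

/-!
The codeword with parameters `(α, β, γ)` has the coordinates `α`, `β + xα` and `γ + yβ + xα` for
`x ≠ 0` and all `y`. So every count of zero coordinates is a count of solutions of `b + xa = 0` in
`ZMod q`, which is `0` or the size of the kernel of `x ↦ xa`. For `a ≠ 0` the image of that map is
a nontrivial subgroup of `ZMod q`, hence has at least `d = q.minFac` elements, and the kernel has at
most `q / d`. Going through the cases `β ≠ 0`, `β = 0 ≠ α` and `α = β = 0` bounds the number of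
zeros of a nonzero codeword by `(q / d) (q + 1) - 1`, and the codeword with `α = q / d`, `β = 0`,
`γ = -α` has exactly that many.
-/

open Finset

namespace Nat

theorem div_minFac_pos {q : ℕ} (hq : q ≠ 0) : 0 < q / q.minFac :=
  Nat.div_pos (minFac_le (Nat.pos_of_ne_zero hq)) q.minFac_pos

theorem div_minFac_lt {q : ℕ} (hq₀ : q ≠ 0) (hq₁ : q ≠ 1) : q / q.minFac < q :=
  Nat.div_lt_self (Nat.pos_of_ne_zero hq₀) (minFac_prime hq₁).one_lt

theorem sub_sub_one_mul_add_mul_add_one {m q : ℕ} (h : m < q) :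
    (q - m - 1) * (q + 1) + m * (q + 1) + 1 = q ^ 2 := by
  obtain ⟨k, rfl⟩ := Nat.exists_eq_add_of_lt h
  rw [show m + k + 1 - m - 1 = k by omega]
  ring

end Nat

theorem AddSubgroup.minFac_le_card_of_ne_bot {q : ℕ} [NeZero q] {H : AddSubgroup (ZMod q)}
    (hH : H ≠ ⊥) : q.minFac ≤ Nat.card H := by
  have hq : q ≠ 1 := by rintro rfl; exact hH (Subsingleton.elim _ _)
  exact_mod_cast AddMonoid.le_minOrder_iff_forall_addSubgroup.1
    (ZMod.minOrder (NeZero.ne q) hq).ge hH (Set.toFinite _)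

theorem Finset.card_filter_univ_erase_add_one {α : Type*} [Fintype α] [DecidableEq α] {a : α}
    (p : α → Prop) [DecidablePred p] (ha : p a) :
    #{x ∈ univ.erase a | p x} + 1 = #{x | p x} := by
  rw [filter_erase, card_erase_add_one (mem_filter.mpr ⟨mem_univ a, ha⟩)]

namespace AddMonoidHom

variable {G : Type*} [AddGroup G]

theorem card_ker_mul_minFac_le [Finite G] {q : ℕ} [NeZero q] (f : G →+ ZMod q) (hf : f ≠ 0) :
    Nat.card f.ker * q.minFac ≤ Nat.card G := by
  rw [← f.ker.card_mul_index, AddSubgroup.index_ker]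
  exact Nat.mul_le_mul_left _
    (AddSubgroup.minFac_le_card_of_ne_bot (by simpa [range_eq_bot_iff] using hf))

variable [Fintype G] {H : Type*} [AddGroup H] [DecidableEq H]

theorem card_ker_eq_card_filter (f : G →+ H) : Nat.card f.ker = #{g | f g = 0} := by
  rw [← Nat.card_eq_finsetCard]
  simp [mem_ker]

theorem card_fiber_le_card_ker (f : G →+ H) (y : H) : #{g | f g = y} ≤ #{g | f g = 0} := by
  by_cases hy : y ∈ Set.range f
  · exact (card_fiber_eq_of_mem_range f hy ⟨0, map_zero f⟩).le
  · simp_all [filter_false_of_mem]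

end AddMonoidHom

namespace ZMod

variable {q : ℕ} [NeZero q]

theorem card_univ_erase_zero : #(univ.erase (0 : ZMod q)) = q - 1 := by
  simp [card_erase_of_mem]

theorem sum_range_pred_natCast_succ {M : Type*} [AddCommMonoid M] (f : ZMod q → M) :
    ∑ i ∈ range (q - 1), f ((i + 1 : ℕ) : ZMod q) = ∑ x ∈ univ.erase 0, f x := by
  have hval : ∀ i ∈ range (q - 1), ((i + 1 : ℕ) : ZMod q).val = i + 1 := fun i hi =>
    val_cast_of_lt (by rw [mem_range] at hi; omega)
  refine sum_nbij' (fun i => ((i + 1 : ℕ) : ZMod q)) (fun x => x.val - 1) ?_ ?_ ?_ ?_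
    (fun _ _ => rfl)
  · intro i hi
    simp only [mem_erase, mem_univ, and_true]
    intro h0
    simpa [h0] using hval i hi
  · intro x hx
    simp only [mem_erase, mem_univ, and_true, mem_range] at hx ⊢
    have := val_lt x
    have := (val_ne_zero x).mpr hx
    omega
  · intro i hi
    simp only [hval i hi, add_tsub_cancel_right]
  · intro x hx
    simp only [mem_erase, mem_univ, and_true] at hx
    have := (val_ne_zero x).mpr hx
    simp [Nat.sub_add_cancel (Nat.one_le_iff_ne_zero.mpr this)]

theorem card_filter_add_mul_eq_zero_le (b a : ZMod q) :
    #{x | b + x * a = 0} ≤ #{x | x * a = 0} := by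
  convert (AddMonoidHom.mulRight a).card_fiber_le_card_ker (-b) using 3
  · simp [add_eq_zero_iff_eq_neg']
  · simp

theorem card_filter_neg_add_mul_eq_zero (a : ZMod q) :
    #{x | -a + x * a = 0} = #{x | x * a = 0} := by
  convert AddMonoidHom.card_fiber_eq_of_mem_range (AddMonoidHom.mulRight a)
    ⟨1, one_mul a⟩ ⟨0, zero_mul a⟩ using 3
  · simp [neg_add_eq_zero, eq_comm]
  · simp

theorem card_filter_mul_eq_zero_le {a : ZMod q} (ha : a ≠ 0) :
    #{x | x * a = 0} ≤ q / q.minFac := by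
  have hf : AddMonoidHom.mulRight a ≠ 0 := fun h => ha (by simpa using DFunLike.congr_fun h 1)
  have := (AddMonoidHom.mulRight a).card_ker_mul_minFac_le hf
  rw [AddMonoidHom.card_ker_eq_card_filter, Nat.card_zmod] at this
  convert (Nat.le_div_iff_mul_le q.minFac_pos).mpr this using 3
  simp

theorem card_filter_mul_natCast_eq_zero {n d : ℕ} (h : d * n = q) :
    #{x : ZMod q | x * n = 0} = n := by
  have hd : NeZero d := ⟨left_ne_zero_of_mul (h ▸ NeZero.ne q)⟩
  have hn : 0 < n := Nat.pos_of_ne_zero (right_ne_zero_of_mul (h ▸ NeZero.ne q))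
  let f := (castHom (Dvd.intro n h) (ZMod d)).toAddMonoidHom
  have hker : ∀ x : ZMod q, x * n = 0 ↔ f x = 0 := fun x => by
    obtain ⟨v, rfl⟩ : ∃ v : ℕ, (v : ZMod q) = x := ⟨x.val, natCast_zmod_val x⟩
    have hdvd : q ∣ v * n ↔ d ∣ v := h ▸ Nat.mul_dvd_mul_iff_right hn
    rw [← Nat.cast_mul, natCast_eq_zero_iff, hdvd]
    simp [f, natCast_eq_zero_iff]
  have hrange : Nat.card f.range = d := by
    rw [AddMonoidHom.range_eq_top.mpr (castHom_surjective (Dvd.intro n h))]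
    simp
  have hcard := f.ker.card_mul_index
  rw [AddSubgroup.index_ker, hrange, f.card_ker_eq_card_filter, Nat.card_zmod] at hcard
  simp only [hker]
  exact Nat.eq_of_mul_eq_mul_right (Nat.pos_of_ne_zero (NeZero.ne d))
    (by rw [hcard, ← h, mul_comm])

end ZMod

theorem wt_add_count_zero {q : ℕ} (l : List (ZMod q)) : wt l + l.count 0 = l.length := by
  rw [List.length_eq_countP_add_countP (fun x => decide (x ≠ 0))]
  simp [wt, List.count, Bool.beq_eq_decide_eq]

theorem length_simplexWord (q : ℕ) (α : ZMod q) (c : List (ZMod q)) :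
    (simplexWord q α c).length = c.length + (q - 1) * c.length + 1 := by
  simp [simplexWord, List.length_flatMap, add_assoc]

theorem length_macWord (q : ℕ) (α : ZMod q) (c : List (ZMod q)) :
    (macWord q α c).length = (q - 1) * c.length + 1 := by
  simp [macWord, List.length_flatMap]

theorem simplexWord_nil (q : ℕ) (γ : ZMod q) : simplexWord q γ [] = [γ] := by
  simp [simplexWord]

theorem simplexWord_inj {q : ℕ} {α α' : ZMod q} {c c' : List (ZMod q)}
    (h : simplexWord q α c = simplexWord q α' c') (hc : c.length = c'.length) :
    α = α' ∧ c = c' := by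
  obtain ⟨rfl, h⟩ := List.append_inj h hc
  exact ⟨(List.cons.inj h).1, rfl⟩

theorem macWord_inj {q : ℕ} (hq : 2 ≤ q) {α α' : ZMod q} {c c' : List (ZMod q)}
    (h : macWord q α c = macWord q α' c') (hc : c.length = c'.length) :
    α = α' ∧ c = c' := by
  obtain ⟨rfl, h⟩ := List.cons.inj h
  obtain ⟨n, hn⟩ : ∃ n, q - 1 = n + 1 := ⟨q - 2, by omega⟩
  rw [hn, List.range_succ_eq_map, List.flatMap_cons, List.flatMap_cons] at h
  refine ⟨rfl, List.map_injective_iff.mpr (add_left_injective _) (List.append_inj h ?_).1⟩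
  simpa using hc

theorem macdonald_three_eq_range (q : ℕ) :
    macdonald q 3 = Set.range fun t : ZMod q × ZMod q × ZMod q =>
      macWord q t.1 (simplexWord q t.2.1 [t.2.2]) := by
  ext w
  constructor
  · rintro ⟨α, c, ⟨c₁, ⟨c₀, rfl, γ, rfl⟩, β, rfl⟩, rfl⟩
    exact ⟨(α, β, γ), by rw [simplexWord_nil]⟩
  · rintro ⟨⟨α, β, γ⟩, rfl⟩
    exact ⟨α, _, ⟨[γ], ⟨[], rfl, γ, (simplexWord_nil q γ).symm⟩, β, rfl⟩, rfl⟩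

theorem macWord_simplexWord_injective {q : ℕ} (hq : 2 ≤ q) :
    Function.Injective fun t : ZMod q × ZMod q × ZMod q =>
      macWord q t.1 (simplexWord q t.2.1 [t.2.2]) := by
  rintro ⟨α, β, γ⟩ ⟨α', β', γ'⟩ h
  obtain ⟨rfl, h⟩ := macWord_inj hq h (by simp [length_simplexWord])
  obtain ⟨rfl, h⟩ := simplexWord_inj h rfl
  simp_all

theorem length_macWord_simplexWord {q : ℕ} [NeZero q] (α β γ : ZMod q) :
    (macWord q α (simplexWord q β [γ])).length = q ^ 2 := by
  obtain ⟨n, rfl⟩ := Nat.exists_eq_add_one_of_ne_zero (NeZero.ne q)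
  simp only [length_macWord, length_simplexWord, List.length_singleton, add_tsub_cancel_right]
  ring

section Counting

variable {q : ℕ} [NeZero q]

theorem count_zero_flatMap_range (f : ZMod q → List (ZMod q)) :
    ((List.range (q - 1)).flatMap fun i => f ((i + 1 : ℕ) : ZMod q)).count 0 =
      ∑ x ∈ univ.erase 0, (f x).count 0 := by
  rw [List.count_flatMap, ← ZMod.sum_range_pred_natCast_succ]
  simp [Finset.sum_eq_multiset_sum, ← Multiset.coe_range, Function.comp_def]

theorem count_zero_macWord (α : ZMod q) (c : List (ZMod q)) :
    (macWord q α c).count 0 =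
      (if α = 0 then 1 else 0) + ∑ x ∈ univ.erase 0, (c.map (· + x * α)).count 0 := by
  rw [macWord, List.count_cons, count_zero_flatMap_range (fun x => c.map (· + x * α)), add_comm]
  simp

theorem count_zero_map_add_simplexWord (β γ t : ZMod q) :
    ((simplexWord q β [γ]).map (· + t)).count 0 =
      (if β + t = 0 then 1 else 0) + #{y | γ + y * β + t = 0} := by
  have hflat : ((List.range (q - 1)).flatMap
      fun i => [γ + ((i + 1 : ℕ) : ZMod q) * β + t]).count 0 =
        ∑ y ∈ univ.erase 0, if γ + y * β + t = 0 then 1 else 0 := by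
    rw [count_zero_flatMap_range (fun y => [γ + y * β + t])]
    simp [List.count_cons]
  simp only [simplexWord, List.map_cons, List.map_nil, List.map_flatMap, List.cons_append,
    List.nil_append, List.count_cons]
  rw [hflat, card_filter, ← add_sum_erase _ _ (mem_univ 0)]
  simp only [beq_iff_eq, zero_mul, add_zero]
  ring

theorem count_zero_macWord_simplexWord (α β γ : ZMod q) :
    (macWord q α (simplexWord q β [γ])).count 0 =
      (if α = 0 then 1 else 0) + #{x ∈ univ.erase 0 | β + x * α = 0} +
        ∑ x ∈ univ.erase 0, #{y | γ + y * β + x * α = 0} := by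
  simp only [count_zero_macWord, count_zero_map_add_simplexWord, sum_add_distrib, card_filter]
  ring

theorem count_zero_macWord_simplexWord_zero (α γ : ZMod q) :
    (macWord q α (simplexWord q 0 [γ])).count 0 =
      (if α = 0 then 1 else 0) + #{x ∈ univ.erase 0 | x * α = 0} +
        q * #{x ∈ univ.erase 0 | γ + x * α = 0} := by
  rw [count_zero_macWord_simplexWord]
  simp [filter_const, apply_ite, sum_ite, mul_comm]

theorem count_zero_macWord_simplexWord_le_of_ne_zero {β : ZMod q} (hβ : β ≠ 0) (α γ : ZMod q) :
    (macWord q α (simplexWord q β [γ])).count 0 ≤ q * (q / q.minFac) := by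
  have hm := Nat.div_minFac_pos (NeZero.ne q)
  have hfirst : (if α = 0 then 1 else 0) + #{x ∈ univ.erase 0 | β + x * α = 0} ≤ q / q.minFac := by
    by_cases hα : α = 0
    · simp only [hα, hβ, if_true, mul_zero, add_zero, filter_false, card_empty]
      exact hm
    · calc (if α = 0 then 1 else 0) + #{x ∈ univ.erase 0 | β + x * α = 0}
          = #{x ∈ univ.erase 0 | β + x * α = 0} := by simp [hα]
        _ ≤ #{x | β + x * α = 0} := card_le_card (filter_subset_filter _ (erase_subset _ _))
        _ ≤ #{x | x * α = 0} := ZMod.card_filter_add_mul_eq_zero_le β α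
        _ ≤ q / q.minFac := ZMod.card_filter_mul_eq_zero_le hα
  have hrest : ∑ x ∈ univ.erase 0, #{y | γ + y * β + x * α = 0} ≤ (q - 1) * (q / q.minFac) := by
    rw [← ZMod.card_univ_erase_zero, ← smul_eq_mul]
    refine sum_le_card_nsmul _ _ _ fun x _ => ?_
    simp only [add_right_comm γ]
    exact (ZMod.card_filter_add_mul_eq_zero_le _ β).trans (ZMod.card_filter_mul_eq_zero_le hβ)
  rw [count_zero_macWord_simplexWord]
  have hq := NeZero.pos q
  calc _ ≤ q / q.minFac + (q - 1) * (q / q.minFac) := add_le_add hfirst hrest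
    _ = q * (q / q.minFac) := by
      rw [add_comm, ← Nat.succ_mul, Nat.succ_eq_add_one, Nat.sub_add_cancel hq]

theorem count_zero_macWord_simplexWord_zero_add_one_le {α : ZMod q} (hα : α ≠ 0) (γ : ZMod q) :
    (macWord q α (simplexWord q 0 [γ])).count 0 + 1 ≤ q / q.minFac * (q + 1) := by
  have hker : #{x ∈ univ.erase 0 | x * α = 0} + 1 ≤ q / q.minFac := by
    rw [card_filter_univ_erase_add_one (· * α = 0) (zero_mul α)]
    exact ZMod.card_filter_mul_eq_zero_le hα
  have hfiber : #{x ∈ univ.erase 0 | γ + x * α = 0} ≤ q / q.minFac :=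
    (card_le_card (filter_subset_filter _ (erase_subset _ _))).trans
      ((ZMod.card_filter_add_mul_eq_zero_le γ α).trans (ZMod.card_filter_mul_eq_zero_le hα))
  rw [count_zero_macWord_simplexWord_zero, if_neg hα]
  nlinarith

theorem count_zero_macWord_simplexWord_add_one_le {α β γ : ZMod q} (h : (α, β, γ) ≠ 0) :
    (macWord q α (simplexWord q β [γ])).count 0 + 1 ≤ q / q.minFac * (q + 1) := by
  have hm := Nat.div_minFac_pos (NeZero.ne q)
  by_cases hβ : β = 0
  · subst hβ
    by_cases hα : α = 0
    · subst hα
      have hγ : γ ≠ 0 := by simpa using h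
      have hcount : (macWord q 0 (simplexWord q 0 [γ])).count 0 = q := by
        rw [count_zero_macWord_simplexWord_zero]
        simp only [if_true, mul_zero, add_zero, filter_true, filter_false, card_empty, hγ,
          ZMod.card_univ_erase_zero]
        have := NeZero.pos q
        omega
      rw [hcount]
      nlinarith
    · exact count_zero_macWord_simplexWord_zero_add_one_le hα γ
  · have := count_zero_macWord_simplexWord_le_of_ne_zero hβ α γ
    nlinarith

theorem count_zero_macWord_simplexWord_div_minFac (hq : q ≠ 1) :
    (macWord q ((q / q.minFac : ℕ) : ZMod q)
      (simplexWord q 0 [-((q / q.minFac : ℕ) : ZMod q)])).count 0 + 1 =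
        q / q.minFac * (q + 1) := by
  set m := q / q.minFac
  have hK : #{x : ZMod q | x * m = 0} = m :=
    ZMod.card_filter_mul_natCast_eq_zero (Nat.mul_div_cancel' q.minFac_dvd)
  have hm0 : (m : ZMod q) ≠ 0 := fun h => by
    have hmq : m < q := Nat.div_minFac_lt (NeZero.ne q) hq
    simp only [h, mul_zero, filter_true, card_univ, ZMod.card] at hK
    omega
  have hfiber : #{x ∈ univ.erase 0 | -(m : ZMod q) + x * m = 0} = m := by
    rw [filter_erase, erase_eq_of_notMem (by simp [hm0]), ZMod.card_filter_neg_add_mul_eq_zero, hK]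
  rw [count_zero_macWord_simplexWord_zero, if_neg hm0, hfiber, zero_add, add_right_comm,
    card_filter_univ_erase_add_one (· * (m : ZMod q) = 0) (zero_mul _), hK]
  ring

theorem wt_macWord_simplexWord (α β γ : ZMod q) :
    wt (macWord q α (simplexWord q β [γ])) =
      q ^ 2 - (macWord q α (simplexWord q β [γ])).count 0 := by
  have := wt_add_count_zero (macWord q α (simplexWord q β [γ]))
  rw [length_macWord_simplexWord] at this
  omega

theorem wt_macWord_simplexWord_div_minFac (hq : q ≠ 1) :
    wt (macWord q ((q / q.minFac : ℕ) : ZMod q)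
      (simplexWord q 0 [-((q / q.minFac : ℕ) : ZMod q)])) =
        2 + (q - q / q.minFac - 1) * (q + 1) := by
  have hcount := count_zero_macWord_simplexWord_div_minFac hq
  have key := Nat.sub_sub_one_mul_add_mul_add_one (Nat.div_minFac_lt (NeZero.ne q) hq)
  rw [wt_macWord_simplexWord]
  generalize q / q.minFac = m at hcount key ⊢
  omega

theorem le_wt_macWord_simplexWord (hq : q ≠ 1) {α β γ : ZMod q}
    (h : wt (macWord q α (simplexWord q β [γ])) ≠ 0) :
    2 + (q - q / q.minFac - 1) * (q + 1) ≤ wt (macWord q α (simplexWord q β [γ])) := by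
  have hαβγ : (α, β, γ) ≠ 0 := by
    rintro h0
    obtain ⟨rfl, rfl, rfl⟩ : α = 0 ∧ β = 0 ∧ γ = 0 := by simpa using h0
    simp [wt, macWord, simplexWord, List.countP_eq_zero] at h
  have hcount := count_zero_macWord_simplexWord_add_one_le hαβγ
  have key := Nat.sub_sub_one_mul_add_mul_add_one (Nat.div_minFac_lt (NeZero.ne q) hq)
  rw [wt_macWord_simplexWord]
  generalize q / q.minFac = m at hcount key ⊢
  omega

end Counting

/-- The `ZMod q`-MacDonald code `M_{3,2}(q)` is a
`[q², 3, 2 + (q − q/d − 1)(q + 1)]` `ZMod q`-linear code, where `d > 1` is the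
smallest divisor of `q`; in particular its minimum Hamming distance equals
`2 + (q − q/d − 1)(q + 1)`. -/
theorem macdonald_three_two_params (q : ℕ) (hq : 2 ≤ q) :
    (∀ w ∈ macdonald q 3, w.length = q ^ 2) ∧
    (macdonald q 3).ncard = q ^ 3 ∧
    IsLeast {m | ∃ w ∈ macdonald q 3, wt w ≠ 0 ∧ wt w = m}
      (2 + (q - q / q.minFac - 1) * (q + 1)) := by
  have : NeZero q := ⟨by omega⟩
  rw [macdonald_three_eq_range]
  refine ⟨?_, ?_, ⟨_, ⟨((q / q.minFac : ℕ), 0, -(q / q.minFac : ℕ)), rfl⟩, ?_⟩, ?_⟩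
  · rintro _ ⟨⟨α, β, γ⟩, rfl⟩
    exact length_macWord_simplexWord α β γ
  · rw [← Set.image_univ, Set.ncard_image_of_injective _ (macWord_simplexWord_injective hq),
      Set.ncard_univ, Nat.card_prod, Nat.card_prod, Nat.card_zmod]
    ring
  · have h := wt_macWord_simplexWord_div_minFac (q := q) (by omega)
    exact ⟨by simp [h], h⟩
  · rintro _ ⟨_, ⟨⟨α, β, γ⟩, rfl⟩, hne, rfl⟩
    exact le_wt_macWord_simplexWord (by omega) hne
end

section
/- For every integer q ≥ 2, among the codewords (0, c, c, …, c) of the Z_q-MacDonald code M_{3,2}(q) obtained with α = 0 and c ranging over S_2(q), there are: exactly 1 of Hamming weight 0; exactly d·φ(d) of Hamming weight (q − 1)(q − q/d + 1), for each divisor d of q with d ≠ 1 and d ≠ q; exactly q·φ(q) + q − 1 of Hamming weight (q − 1)q; and exactly q(q − 1) − Σ_{d | q, d ≠ 1} d·φ(d) of Hamming weight q^2 − 1, where φ is Euler's totient function. -/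
/-!
A codeword of `S_2(q)` is `(β, α, β + α, …, β + (q - 1)α)`, and the MacDonald word with `α = 0`
repeats it `q - 1` times, so its weight is `q - 1` times `[α ≠ 0] + #{j ∈ Z_q | β + jα ≠ 0}`.
The solutions of `jα = -β` form a coset of the kernel of `j ↦ jα` when `β` lies in its image
`⟨α⟩`, so there are `q / ord α` of them, and there are none otherwise. Hence the weight depends only
on `ord α` and on whether `β ∈ ⟨α⟩`, and the counts follow because `Z_q` has `φ d` elements of
order `d` for each `d ∣ q`.
-/

open Finset

theorem Finset.card_filter_prod_and {α β : Type*} [Fintype α] [Fintype β] (A : α → Prop)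
    (B : α → β → Prop) [DecidablePred A] [∀ a b, Decidable (B a b)] :
    #{p : α × β | A p.1 ∧ B p.1 p.2} = ∑ a with A a, #{b | B a b} := by
  simp only [card_filter, Fintype.sum_prod_type, sum_filter]
  refine sum_congr rfl fun a _ => ?_
  split_ifs with ha <;> simp [ha]

theorem AddMonoidHom.card_fiber_of_mem_range {G H : Type*} [AddGroup G] [Fintype G] [AddGroup H]
    [DecidableEq H] (f : G →+ H) {y : H} (hy : y ∈ f.range) :
    #{g | f g = y} = Nat.card G / Nat.card f.range := by
  have hker : #{g | f g = y} = Nat.card f.ker := by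
    rw [AddMonoidHom.card_fiber_eq_of_mem_range f hy ⟨0, map_zero f⟩, ← SetLike.coe_sort_coe,
      Nat.card_coe_set_eq, ← Set.ncard_coe_finset]
    congr 1
    ext g
    simp
  rw [hker, ← f.ker.card_mul_index, AddSubgroup.index_ker, Nat.mul_div_cancel _ Nat.card_pos]

section CyclicGroup

variable {G : Type*} [AddGroup G] [Fintype G]

theorem card_filter_fst_eq_zero_snd_ne_zero [DecidableEq G] :
    #{p : G × G | p.1 = 0 ∧ p.2 ≠ 0} = Fintype.card G - 1 := by
  rw [card_filter_prod_and (· = 0) fun _ b => b ≠ 0, filter_eq', if_pos (mem_univ _),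
    sum_singleton, filter_ne', card_erase_of_mem (mem_univ _), card_univ]

theorem card_filter_mem_zmultiples (a : G) :
    #{b : G | b ∈ AddSubgroup.zmultiples a} = addOrderOf a := by
  rw [← Nat.card_zmultiples, ← SetLike.coe_sort_coe, Nat.card_coe_set_eq, ← Set.ncard_coe_finset]
  simp

variable [IsAddCyclic G]

theorem card_filter_addOrderOf_eq_mem_zmultiples {d : ℕ} (hd : d ∣ Fintype.card G) :
    #{p : G × G | addOrderOf p.1 = d ∧ p.2 ∈ AddSubgroup.zmultiples p.1} = d * Nat.totient d := by
  rw [card_filter_prod_and (addOrderOf · = d) fun a b => b ∈ AddSubgroup.zmultiples a,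
    sum_congr rfl fun a ha => (card_filter_mem_zmultiples a).trans (mem_filter.1 ha).2,
    sum_const, IsAddCyclic.card_addOrderOf_eq_totient hd, smul_eq_mul, mul_comm]

theorem sum_addOrderOf_ne_zero [DecidableEq G] :
    ∑ a : G with a ≠ 0, addOrderOf a
      = ∑ d ∈ (Fintype.card G).divisors with d ≠ 1, d * Nat.totient d := by
  rw [← sum_fiberwise_of_maps_to (g := addOrderOf) (t := (Fintype.card G).divisors.filter (· ≠ 1))]
  · refine sum_congr rfl fun d hd => ?_
    obtain ⟨⟨hdG, -⟩, hd1⟩ := by simpa only [mem_filter, Nat.mem_divisors] using hd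
    have hfilter : ({a : G | a ≠ 0} : Finset G).filter (addOrderOf · = d)
        = ({a | addOrderOf a = d} : Finset G) := by
      ext a
      simp only [mem_filter, mem_univ, true_and, and_iff_right_iff_imp]
      rintro rfl rfl
      exact hd1 addOrderOf_zero
    rw [hfilter, sum_congr rfl fun a ha => (mem_filter.1 ha).2, sum_const,
      IsAddCyclic.card_addOrderOf_eq_totient hdG, smul_eq_mul, mul_comm]
  · intro a ha
    simp only [mem_filter, mem_univ, true_and, Nat.mem_divisors] at ha ⊢
    exact ⟨⟨addOrderOf_dvd_card, Fintype.card_ne_zero⟩,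
      fun h => ha (AddMonoid.addOrderOf_eq_one_iff.1 h)⟩

theorem card_filter_fst_ne_zero_snd_mem_zmultiples [DecidableEq G] :
    #{p : G × G | p.1 ≠ 0 ∧ p.2 ∈ AddSubgroup.zmultiples p.1}
      = ∑ d ∈ (Fintype.card G).divisors with d ≠ 1, d * Nat.totient d := by
  rw [card_filter_prod_and (· ≠ 0) fun a b => b ∈ AddSubgroup.zmultiples a,
    ← sum_addOrderOf_ne_zero]
  exact sum_congr rfl fun a _ => card_filter_mem_zmultiples a

theorem card_filter_fst_ne_zero_snd_not_mem_zmultiples [DecidableEq G] :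
    #{p : G × G | p.1 ≠ 0 ∧ p.2 ∉ AddSubgroup.zmultiples p.1}
      = Fintype.card G * (Fintype.card G - 1)
        - ∑ d ∈ (Fintype.card G).divisors with d ≠ 1, d * Nat.totient d := by
  have hsplit := card_filter_add_card_filter_not (s := ({p : G × G | p.1 ≠ 0} : Finset _))
    (fun p => p.2 ∈ AddSubgroup.zmultiples p.1)
  have hfst : #{p : G × G | p.1 ≠ 0} = Fintype.card G * (Fintype.card G - 1) := by
    rw [← univ_product_univ, filter_product_left fun a : G => a ≠ 0, card_product, filter_ne',
      card_erase_of_mem (mem_univ _), card_univ, mul_comm]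
  rw [filter_filter, filter_filter, card_filter_fst_ne_zero_snd_mem_zmultiples, hfst] at hsplit
  omega

end CyclicGroup

theorem List.countP_range_eq_card_filter (q : ℕ) (p : ℕ → Prop) [DecidablePred p] :
    (List.range q).countP (fun i => decide (p i)) = #{i ∈ Finset.range q | p i} := by
  rw [Finset.card_def, Finset.filter_val, Finset.range_val, Multiset.range, Multiset.filter_coe]
  simp [List.countP_eq_length_filter]

namespace ZMod

variable {q : ℕ}

theorem range_mulRight (α : ZMod q) :
    (AddMonoidHom.mulRight α).range = AddSubgroup.zmultiples α := by
  ext y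
  simp only [AddMonoidHom.mem_range, AddMonoidHom.coe_mulRight, AddSubgroup.mem_zmultiples_iff,
    zsmul_eq_mul]
  constructor
  · rintro ⟨j, rfl⟩
    exact ⟨j.cast, by rw [ZMod.intCast_cast, ZMod.cast_id', id]⟩
  · rintro ⟨n, rfl⟩
    exact ⟨n, rfl⟩

variable [NeZero q]

theorem card_filter_range_natCast (p : ZMod q → Prop) [DecidablePred p] :
    #((Finset.range q).filter fun i : ℕ => p i) = #{j : ZMod q | p j} := by
  apply card_nbij' (↑) ZMod.val
  · intro i hi
    simp_all
  · intro j hj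
    simp_all [ZMod.val_lt]
  · intro i hi
    simp_all [Nat.mod_eq_of_lt]
  · intro j _
    simp

theorem addOrderOf_dvd (α : ZMod q) : addOrderOf α ∣ q := by
  simpa using addOrderOf_dvd_natCard α

theorem div_addOrderOf_pos (α : ZMod q) : 0 < q / addOrderOf α :=
  Nat.div_pos (Nat.le_of_dvd (NeZero.pos q) (addOrderOf_dvd α)) (addOrderOf_pos α)

theorem div_addOrderOf_eq_div_iff (α : ZMod q) {d : ℕ} (hd : d ∣ q) :
    q / addOrderOf α = q / d ↔ addOrderOf α = d :=
  Nat.div_eq_iff_eq_of_dvd_dvd (NeZero.ne q) (addOrderOf_dvd α) hd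

theorem card_filter_mul_eq (α y : ZMod q) :
    #{j : ZMod q | j * α = y}
      = if y ∈ AddSubgroup.zmultiples α then q / addOrderOf α else 0 := by
  split_ifs with hy
  · rw [← range_mulRight] at hy
    have := (AddMonoidHom.mulRight α).card_fiber_of_mem_range hy
    rwa [Nat.card_zmod, range_mulRight, Nat.card_zmultiples] at this
  · rw [card_eq_zero, filter_eq_empty_iff]
    rintro j - rfl
    exact hy (AddSubgroup.mem_zmultiples_iff.mpr ⟨j.cast, by simp [zsmul_eq_mul]⟩)

end ZMod

theorem wt_macWord_zero (q : ℕ) (c : List (ZMod q)) :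
    wt (macWord q 0 c) = (q - 1) * wt c := by
  simp [macWord, wt, List.countP_flatMap, Function.comp_def, List.map_const', List.sum_replicate]

theorem simplex_two_eq_range (q : ℕ) :
    simplex q 2 = Set.range fun p : ZMod q × ZMod q => simplexWord q p.1 [p.2] := by
  ext c
  have hbase (β : ZMod q) : simplexWord q β [] = [β] := by simp [simplexWord]
  simp only [simplex, Set.mem_singleton_iff, Set.mem_ofPred_eq, Set.mem_range, Prod.exists]
  constructor
  · rintro ⟨_, ⟨_, rfl, β, rfl⟩, α, rfl⟩
    exact ⟨α, β, by rw [hbase]⟩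
  · rintro ⟨α, β, rfl⟩
    exact ⟨[β], ⟨[], rfl, β, (hbase β).symm⟩, α, rfl⟩

theorem simplexWord_singleton_injective (q : ℕ) :
    Function.Injective fun p : ZMod q × ZMod q => simplexWord q p.1 [p.2] := by
  intro p p' h
  simp only [simplexWord, List.singleton_append, List.cons.injEq] at h
  exact Prod.ext h.2.1 h.1

section SimplexWordWeight

variable {q : ℕ} [NeZero q]

theorem wt_simplexWord_singleton_eq_card (α β : ZMod q) :
    wt (simplexWord q α [β]) = (if α = 0 then 0 else 1) + #{j : ZMod q | β + j * α ≠ 0} := by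
  have hrange : List.range q = 0 :: (List.range (q - 1)).map (· + 1) := by
    rw [← List.range_succ_eq_map, Nat.sub_add_cancel NeZero.one_le]
  rw [← ZMod.card_filter_range_natCast, ← List.countP_range_eq_card_filter, hrange]
  simp only [wt, simplexWord, List.map_cons, List.map_nil, List.singleton_append]
  rw [show ∀ l : List ℕ, l.flatMap (fun i => [β + ((i + 1 : ℕ) : ZMod q) * α])
      = l.map (fun i => β + ((i + 1 : ℕ) : ZMod q) * α) from List.flatMap_pure_eq_map _]
  simp only [ne_eq, decide_not, Nat.cast_add, Nat.cast_one, List.countP_cons, List.countP_map,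
    Function.comp_def, Bool.not_eq_eq_eq_not, Bool.not_true, decide_eq_false_iff_not, ite_not,
    Nat.cast_zero, zero_mul, add_zero]
  ring

theorem wt_simplexWord_singleton (α β : ZMod q) :
    wt (simplexWord q α [β]) = (if α = 0 then 0 else 1)
      + if β ∈ AddSubgroup.zmultiples α then q - q / addOrderOf α else q := by
  have hcompl := card_filter_add_card_filter_not (s := (univ : Finset (ZMod q)))
    (fun j => j * α = -β)
  simp only [ZMod.card_filter_mul_eq, neg_mem_iff, card_univ, ZMod.card] at hcompl
  rw [wt_simplexWord_singleton_eq_card, filter_congr fun j _ => add_eq_zero_iff_eq_neg'.not]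
  split_ifs at hcompl ⊢ <;> omega

theorem wt_simplexWord_zero_singleton (β : ZMod q) :
    wt (simplexWord q 0 [β]) = if β = 0 then 0 else q := by
  simp [wt_simplexWord_singleton]

theorem wt_simplexWord_singleton_of_ne_zero {α : ZMod q} (hα : α ≠ 0) (β : ZMod q) :
    wt (simplexWord q α [β])
      = if β ∈ AddSubgroup.zmultiples α then q + 1 - q / addOrderOf α else q + 1 := by
  have := Nat.div_le_self q (addOrderOf α)
  rw [wt_simplexWord_singleton, if_neg hα]
  split_ifs <;> omega

theorem wt_simplexWord_singleton_eq_zero_iff (α β : ZMod q) :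
    wt (simplexWord q α [β]) = 0 ↔ α = 0 ∧ β = 0 := by
  rcases eq_or_ne α 0 with rfl | hα
  · simp [wt_simplexWord_zero_singleton, NeZero.ne q]
  · have := Nat.div_le_self q (addOrderOf α)
    rw [wt_simplexWord_singleton_of_ne_zero hα]
    simp only [hα, false_and, iff_false]
    split <;> omega

theorem wt_simplexWord_singleton_eq_of_dvd_iff {d : ℕ} (hd : d ∣ q) (hd1 : d ≠ 1) (hdq : d ≠ q)
    (α β : ZMod q) :
    wt (simplexWord q α [β]) = q - q / d + 1
      ↔ addOrderOf α = d ∧ β ∈ AddSubgroup.zmultiples α := by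
  have hqd : q / d ≠ q / q := (Nat.div_eq_iff_eq_of_dvd_dvd (NeZero.ne q) hd dvd_rfl).not.2 hdq
  rw [Nat.div_self (NeZero.pos q)] at hqd
  have := Nat.div_le_self q d
  have := Nat.div_pos (Nat.le_of_dvd (NeZero.pos q) hd) (Nat.pos_of_dvd_of_pos hd (NeZero.pos q))
  rcases eq_or_ne α 0 with rfl | hα
  · simp only [wt_simplexWord_zero_singleton, addOrderOf_zero, Ne.symm hd1, false_and, iff_false]
    split <;> omega
  · have := ZMod.div_addOrderOf_pos α
    have := Nat.div_le_self q (addOrderOf α)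
    rw [wt_simplexWord_singleton_of_ne_zero hα, ← ZMod.div_addOrderOf_eq_div_iff α hd]
    split_ifs with hβ
    · simp only [hβ, and_true]
      omega
    · simp only [hβ, and_false, iff_false]
      omega

theorem wt_simplexWord_singleton_eq_self_iff (hq : 1 < q) (α β : ZMod q) :
    wt (simplexWord q α [β]) = q
      ↔ (α = 0 ∧ β ≠ 0) ∨ (addOrderOf α = q ∧ β ∈ AddSubgroup.zmultiples α) := by
  rcases eq_or_ne α 0 with rfl | hα
  · simp only [wt_simplexWord_zero_singleton, addOrderOf_zero, true_and, hq.ne, false_and, or_false]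
    split_ifs with hβ
    · simp only [hβ, ne_eq, not_true_eq_false, iff_false]
      omega
    · simp [hβ]
  · have := ZMod.div_addOrderOf_pos α
    have := Nat.div_le_self q (addOrderOf α)
    rw [wt_simplexWord_singleton_of_ne_zero hα, ← ZMod.div_addOrderOf_eq_div_iff α dvd_rfl,
      Nat.div_self (NeZero.pos q)]
    split_ifs with hβ
    · simp only [hα, hβ, false_and, and_true, false_or]
      omega
    · simp only [hα, hβ, false_and, and_false, or_false, iff_false]
      omega

theorem wt_simplexWord_singleton_eq_succ_iff (α β : ZMod q) :
    wt (simplexWord q α [β]) = q + 1 ↔ α ≠ 0 ∧ β ∉ AddSubgroup.zmultiples α := by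
  rcases eq_or_ne α 0 with rfl | hα
  · simp only [wt_simplexWord_zero_singleton, ne_eq, not_true_eq_false, false_and, iff_false]
    split <;> omega
  · have := ZMod.div_addOrderOf_pos α
    rw [wt_simplexWord_singleton_of_ne_zero hα]
    split_ifs with hβ
    · simp only [hβ, not_true_eq_false, and_false, iff_false]
      omega
    · simp only [hα, hβ, ne_eq, not_false_eq_true, and_self]

theorem ncard_simplex_two_wt_macWord_zero (hq : 1 < q) {W w : ℕ} (hW : W = (q - 1) * w) :
    {c ∈ simplex q 2 | wt (macWord q 0 c) = W}.ncard
      = #{p : ZMod q × ZMod q | wt (simplexWord q p.1 [p.2]) = w} := by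
  have hset : {c ∈ simplex q 2 | wt (macWord q 0 c) = W}
      = (fun p : ZMod q × ZMod q => simplexWord q p.1 [p.2]) ''
          {p | wt (simplexWord q p.1 [p.2]) = w} := by
    rw [simplex_two_eq_range]
    ext c
    simp only [Set.mem_range, Set.mem_image, Set.mem_ofPred_eq, Prod.exists,
      hW, wt_macWord_zero, mul_right_inj' (Nat.sub_ne_zero_of_lt hq)]
    constructor
    · rintro ⟨⟨α, β, rfl⟩, h⟩
      exact ⟨α, β, h, rfl⟩
    · rintro ⟨α, β, h, rfl⟩
      exact ⟨⟨α, β, rfl⟩, h⟩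
  rw [hset, Set.ncard_image_of_injective _ (simplexWord_singleton_injective q),
    ← Set.ncard_coe_finset]
  simp

end SimplexWordWeight

/-- Among the codewords `(0, c, …, c)` of `M_{3,2}(q)` with `c ∈ S_2(q)`, exactly 1 has
weight 0, exactly `d·φ(d)` have weight `(q − 1)(q − q/d + 1)` for each divisor `d` of `q`
with `d ≠ 1, d ≠ q`, exactly `q·φ(q) + q − 1` have weight `(q − 1)q`, and exactly
`q(q − 1) − Σ_{d ∣ q, d ≠ 1} d·φ(d)` have weight `q² − 1`. -/
theorem macdonald_three_two_alpha_zero_distribution (q : ℕ) (hq : 2 ≤ q) :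
    ({c ∈ simplex q 2 | wt (macWord q 0 c) = 0}).ncard = 1 ∧
    (∀ d : ℕ, d ∣ q → d ≠ 1 → d ≠ q →
      ({c ∈ simplex q 2 | wt (macWord q 0 c) = (q - 1) * (q - q / d + 1)}).ncard
        = d * Nat.totient d) ∧
    ({c ∈ simplex q 2 | wt (macWord q 0 c) = (q - 1) * q}).ncard
      = q * Nat.totient q + q - 1 ∧
    ({c ∈ simplex q 2 | wt (macWord q 0 c) = q ^ 2 - 1}).ncard
      = q * (q - 1) - ∑ d ∈ q.divisors.filter (fun d => d ≠ 1), d * Nat.totient d := by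
  have : NeZero q := ⟨by omega⟩
  have hcard : Fintype.card (ZMod q) = q := ZMod.card q
  refine ⟨?_, fun d hd hd1 hdq => ?_, ?_, ?_⟩
  · rw [ncard_simplex_two_wt_macWord_zero hq (mul_zero _).symm,
      filter_congr fun p _ => wt_simplexWord_singleton_eq_zero_iff p.1 p.2]
    exact card_eq_one.2 ⟨0, by ext; simp [Prod.ext_iff]⟩
  · rw [ncard_simplex_two_wt_macWord_zero hq rfl,
      filter_congr fun p _ => wt_simplexWord_singleton_eq_of_dvd_iff hd hd1 hdq p.1 p.2,
      card_filter_addOrderOf_eq_mem_zmultiples (by rwa [hcard])]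
  · rw [ncard_simplex_two_wt_macWord_zero hq rfl,
      filter_congr fun p _ => wt_simplexWord_singleton_eq_self_iff hq p.1 p.2, filter_or,
      card_union_of_disjoint (disjoint_filter.2 fun p _ h h' => by simp_all),
      card_filter_fst_eq_zero_snd_ne_zero,
      card_filter_addOrderOf_eq_mem_zmultiples (by rw [hcard]), hcard]
    omega
  · have hsq : q ^ 2 - 1 = (q - 1) * (q + 1) := by simpa [mul_comm] using Nat.sq_sub_sq q 1
    rw [ncard_simplex_two_wt_macWord_zero hq hsq,
      filter_congr fun p _ => wt_simplexWord_singleton_eq_succ_iff p.1 p.2,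
      card_filter_fst_ne_zero_snd_not_mem_zmultiples, hcard]
end
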